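/- arXiv:1703.09765 — 3 statements merged into one kernel-verified Lean document; each statement's English description precedes it below -/
import Mathlib

section
/- Let G_I be a connected undirected graph on vertex set V, let G_m be a maximal triangle-free spanning subgraph of G_I, and let G_C be any graph with G_m ⊆ G_C ⊆ G_I. For i ∈ V, let N_I(i) denote the neighbors of i in G_I, let Ñ_I(j) = N_I(j) ∪ {j}, and let N_C(i) denote the neighbors of i in G_C. Then for every i ∈ V, the union over j ∈ N_C(i) of (N_I(i) ∩ Ñ_I(j)) equals N_I(i). -/
open Set

/-! If `ik` is an edge of `GI` missing from `GC`, it is missing from `Gm`, so adding it to `Gm`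
creates a triangle. Since `Gm` is triangle-free, that triangle contains `i` and `k`, and its third
vertex `j` is a common `Gm`-neighbour of `i` and `k`; then `j ∈ N_C(i)` and `k ∈ N_I(j)`. -/

namespace SimpleGraph

variable {V : Type*} {G : SimpleGraph V} {x y : V}

theorem CliqueFree.exists_adj_adj_of_not_cliqueFree_three_sup_edge (h : G.CliqueFree 3)
    (hne : x ≠ y) (h' : ¬ (G ⊔ edge x y).CliqueFree 3) : ∃ z, G.Adj x z ∧ G.Adj z y := by
  classical
  obtain ⟨t, ht⟩ := not_forall_not.1 h'
  have hx : x ∈ t := h.mem_of_sup_edge_isNClique ht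
  have hy : y ∈ t := h.mem_of_sup_edge_isNClique (edge_comm x y ▸ ht)
  obtain ⟨z, hzt, hzxy⟩ : ∃ z ∈ t, z ∉ ({x, y} : Finset V) := by
    refine Finset.exists_mem_notMem_of_card_lt_card ?_
    rw [ht.card_eq, Finset.card_pair hne]
    norm_num
  simp only [Finset.mem_insert, Finset.mem_singleton, not_or] at hzxy
  have hGy : G.IsNClique 2 (t.erase y) := (edge_comm x y ▸ ht).erase_of_sup_edge_of_mem hy
  have hGx : G.IsNClique 2 (t.erase x) := ht.erase_of_sup_edge_of_mem hx
  exact ⟨z,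
    hGy.isClique (Finset.mem_erase_of_ne_of_mem hne hx) (Finset.mem_erase_of_ne_of_mem hzxy.2 hzt)
      (Ne.symm hzxy.1),
    hGx.isClique (Finset.mem_erase_of_ne_of_mem hzxy.1 hzt)
      (Finset.mem_erase_of_ne_of_mem (Ne.symm hne) hy) hzxy.2⟩

end SimpleGraph

theorem stmt_1_general {V : Type*} (GI Gm GC : SimpleGraph V)
    (hle : Gm ≤ GI) (htf : Gm.CliqueFree 3)
    (hmax : ∀ i j : V, GI.Adj i j → ¬ Gm.Adj i j →
      ¬ (Gm ⊔ SimpleGraph.fromEdgeSet {s(i, j)}).CliqueFree 3)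
    (h1 : Gm ≤ GC) :
    ∀ i : V,
      (⋃ j ∈ GC.neighborSet i, (GI.neighborSet i ∩ insert j (GI.neighborSet j)))
        = GI.neighborSet i := by
  intro i
  refine Subset.antisymm (iUnion₂_subset fun _ _ ↦ inter_subset_left) fun k hik ↦ ?_
  by_cases hCik : GC.Adj i k
  · exact mem_biUnion hCik ⟨hik, mem_insert _ _⟩
  · obtain ⟨j, hij, hjk⟩ := htf.exists_adj_adj_of_not_cliqueFree_three_sup_edge hik.ne
      (hmax i k hik fun h ↦ hCik (h1 h))
    exact mem_biUnion (h1 hij) ⟨hik, mem_insert_of_mem _ (hle hjk)⟩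

/-- For a connected interference graph `GI`, a maximal triangle-free spanning subgraph
`Gm` of `GI`, and any communication graph `GC` with `Gm ⊆ GC ⊆ GI`, each player `i`
can gather the actions of all of its interference neighbors from its communication
neighbors: `⋃_{j ∈ N_C(i)} (N_I(i) ∩ Ñ_I(j)) = N_I(i)`. -/
theorem stmt_1 {V : Type*} [Fintype V] (GI Gm GC : SimpleGraph V)
    (hconn : GI.Connected) (hle : Gm ≤ GI) (htf : Gm.CliqueFree 3)
    (hmax : ∀ i j : V, GI.Adj i j → ¬ Gm.Adj i j →
      ¬ (Gm ⊔ SimpleGraph.fromEdgeSet {s(i, j)}).CliqueFree 3)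
    (h1 : Gm ≤ GC) (h2 : GC ≤ GI) :
    ∀ i : V,
      (⋃ j ∈ GC.neighborSet i, (GI.neighborSet i ∩ insert j (GI.neighborSet j)))
        = GI.neighborSet i :=
  stmt_1_general GI Gm GC hle htf hmax h1
end

section
/- Let e_{s} denote standard unit vectors in R^m, and for each player pair (i,j) with j ∈ Ñ_I(i) let E_j^i = e_{s_{ij}} be a distinct standard unit vector (with E_j^i = 0 if j ∉ Ñ_I(i)), where the index assignment s_{ij} is a bijection onto {1,...,m}. Define H = [Σ_{i=1}^N E_1^i, ..., Σ_{i=1}^N E_N^i] ∈ R^{m×N} and, for a pair i_k, j_k with communication index set ind(i_k,j_k) ⊆ Ñ_I(i_k) ∩ Ñ_I(j_k), define W(k) = I_m - (1/2) Σ_{l ∈ ind(i_k,j_k)} (E_l^{i_k} - E_l^{j_k})(E_l^{i_k} - E_l^{j_k})^T. Then W(k) H = H and H^T W(k) = H^T. -/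
/-!
The row of `H` indexed by the coordinate `s_{al}` is the unit row vector `e_lᵀ`, because
`E_l^a` is the only indicator vector supported there. Hence
`(E_l^{i_k} - E_l^{j_k})ᵀ H = e_lᵀ - e_lᵀ = 0` for every `l ∈ ind(i_k, j_k)`, so every rank-one
term of `W(k)` annihilates `H`. As `W(k)` is symmetric, `Hᵀ W(k) = (W(k) H)ᵀ = Hᵀ`.
-/

open Matrix

namespace Matrix

variable {ι R m n : Type*} [CommRing R] [DecidableEq m]

def gossipMatrix (c : R) (S : Finset ι) (v : ι → m → R) : Matrix m m R :=
  1 - c • ∑ l ∈ S, vecMulVec (v l) (v l)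

theorem gossipMatrix_transpose (c : R) (S : Finset ι) (v : ι → m → R) :
    (gossipMatrix c S v)ᵀ = gossipMatrix c S v := by
  simp only [gossipMatrix, transpose_sub, transpose_one, transpose_smul, transpose_sum,
    transpose_vecMulVec]

variable [Fintype m] {c : R} {S : Finset ι} {v : ι → m → R} {H : Matrix m n R}

theorem gossipMatrix_mul_of_vecMul_eq_zero (hv : ∀ l ∈ S, v l ᵥ* H = 0) :
    gossipMatrix c S v * H = H := by
  have hsum : (∑ l ∈ S, vecMulVec (v l) (v l)) * H = 0 := by
    rw [Matrix.sum_mul]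
    exact Finset.sum_eq_zero fun l hl => by ext; simp [vecMulVec_mul, hv l hl, vecMulVec_apply]
  rw [gossipMatrix, Matrix.sub_mul, Matrix.one_mul, Matrix.smul_mul, hsum, smul_zero, sub_zero]

theorem transpose_mul_gossipMatrix_of_vecMul_eq_zero (hv : ∀ l ∈ S, v l ᵥ* H = 0) :
    Hᵀ * gossipMatrix c S v = Hᵀ := by
  rw [← gossipMatrix_transpose, ← transpose_mul, gossipMatrix_mul_of_vecMul_eq_zero hv]

end Matrix

section Indicators

variable {R : Type*} [Semiring R] {N m : ℕ} {tN : Fin N → Finset (Fin N)} {s : ∀ i j : Fin N, j ∈ tN i → Fin m}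
  {E : Fin N → Fin N → Fin m → R}
  (hE : ∀ (i j : Fin N) (h : j ∈ tN i), E i j = Pi.single (s i j h) 1)
  (hE0 : ∀ i j : Fin N, j ∉ tN i → E i j = 0)
  (hinj : ∀ (i j : Fin N) (hij : j ∈ tN i) (i' j' : Fin N) (hij' : j' ∈ tN i'),
      s i j hij = s i' j' hij' → i = i' ∧ j = j')
include hE hE0 hinj

theorem indicator_apply_coord {a l : Fin N} (hl : l ∈ tN a) (i j : Fin N) :
    E i j (s a l hl) = if a = i ∧ l = j then 1 else 0 := by
  by_cases hj : j ∈ tN i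
  · rw [hE i j hj, Pi.single_apply]
    exact if_congr ⟨hinj a l hl i j hj, by rintro ⟨rfl, rfl⟩; rfl⟩ rfl rfl
  · rw [hE0 i j hj, if_neg]
    · rfl
    · rintro ⟨rfl, rfl⟩
      exact hj hl

theorem row_sum_indicators {a l : Fin N} (hl : l ∈ tN a) :
    (of fun t j => ∑ i, E i j t).row (s a l hl) = Pi.single l 1 := by
  ext j
  rcases eq_or_ne j l with rfl | hjl
  · simp [indicator_apply_coord hE hE0 hinj hl]
  · simp [indicator_apply_coord hE hE0 hinj hl, hjl, hjl.symm]

theorem indicator_vecMul_sum_indicators {a l : Fin N} (hl : l ∈ tN a) :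
    E a l ᵥ* (of fun t j => ∑ i, E i j t) = Pi.single l 1 := by
  rw [hE a l hl, single_one_vecMul, row_sum_indicators hE hE0 hinj hl]

end Indicators

theorem stmt_3_general {N m : ℕ}
    (tN : Fin N → Finset (Fin N))                  -- Ñ_I(i)
    (s : ∀ i j : Fin N, j ∈ tN i → Fin m)          -- coordinate assignment s_{ij}
    (E : Fin N → Fin N → Fin m → ℝ)
    (hE : ∀ (i j : Fin N) (h : j ∈ tN i), E i j = Pi.single (s i j h) 1)
    (hE0 : ∀ i j : Fin N, j ∉ tN i → E i j = 0)
    (hinj : ∀ (i j : Fin N) (hij : j ∈ tN i) (i' j' : Fin N) (hij' : j' ∈ tN i'),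
      s i j hij = s i' j' hij' → i = i' ∧ j = j')
    (H : Matrix (Fin m) (Fin N) ℝ)
    (hH : H = Matrix.of fun (t : Fin m) (j : Fin N) => ∑ i : Fin N, E i j t)
    (ik jk : Fin N) (ind : Finset (Fin N))
    (hind : ∀ l ∈ ind, l ∈ tN ik ∧ l ∈ tN jk)
    (W : Matrix (Fin m) (Fin m) ℝ)
    (hW : W = 1 - (1 / 2 : ℝ) •
      ∑ l ∈ ind, vecMulVec (E ik l - E jk l) (E ik l - E jk l)) :
    W * H = H ∧ Hᵀ * W = Hᵀ := by
  have hv : ∀ l ∈ ind, (E ik l - E jk l) ᵥ* H = 0 := fun l hl => by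
    rw [sub_vecMul, hH, indicator_vecMul_sum_indicators hE hE0 hinj (hind l hl).1,
      indicator_vecMul_sum_indicators hE hE0 hinj (hind l hl).2, sub_self]
  rw [hW]
  exact ⟨gossipMatrix_mul_of_vecMul_eq_zero hv, transpose_mul_gossipMatrix_of_vecMul_eq_zero hv⟩

/-- With the estimate-indicator vectors `E_j^i ∈ ℝ^m` (distinct standard unit vectors
for `j ∈ Ñ_I(i)`, zero otherwise, jointly enumerating all `m` coordinates),
`H = [Σᵢ E_1^i, …, Σᵢ E_N^i]` and the gossip communication matrix
`W(k) = I - (1/2) Σ_{l ∈ ind(i_k,j_k)} (E_l^{i_k} - E_l^{j_k})(E_l^{i_k} - E_l^{j_k})ᵀ`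
satisfy `W(k) H = H` and `Hᵀ W(k) = Hᵀ`. -/
theorem stmt_3 {N m : ℕ}
    (tN : Fin N → Finset (Fin N))                  -- Ñ_I(i)
    (s : ∀ i j : Fin N, j ∈ tN i → Fin m)          -- coordinate assignment s_{ij}
    (E : Fin N → Fin N → Fin m → ℝ)
    (hE : ∀ (i j : Fin N) (h : j ∈ tN i), E i j = Pi.single (s i j h) 1)
    (hE0 : ∀ i j : Fin N, j ∉ tN i → E i j = 0)
    (hinj : ∀ (i j : Fin N) (hij : j ∈ tN i) (i' j' : Fin N) (hij' : j' ∈ tN i'),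
      s i j hij = s i' j' hij' → i = i' ∧ j = j')
    (hsurj : ∀ t : Fin m, ∃ (i j : Fin N) (h : j ∈ tN i), s i j h = t)
    (H : Matrix (Fin m) (Fin N) ℝ)
    (hH : H = Matrix.of fun (t : Fin m) (j : Fin N) => ∑ i : Fin N, E i j t)
    (ik jk : Fin N) (ind : Finset (Fin N))
    (hind : ∀ l ∈ ind, l ∈ tN ik ∧ l ∈ tN jk)
    (W : Matrix (Fin m) (Fin m) ℝ)
    (hW : W = 1 - (1 / 2 : ℝ) •
      ∑ l ∈ ind, vecMulVec (E ik l - E jk l) (E ik l - E jk l)) :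
    W * H = H ∧ Hᵀ * W = Hᵀ :=
  stmt_3_general tN s E hE hE0 hinj H hH ik jk ind hind W hW
end

section
/- (Robbins–Siegmund) Let (V_k), (u_k), (β_k), (ζ_k) be sequences of non-negative random variables adapted to a filtration (M_k). If Σ_k u_k < ∞ a.s., Σ_k β_k < ∞ a.s., and E[V_{k+1} | M_k] ≤ (1 + u_k) V_k − ζ_k + β_k a.s. for all k ≥ 0, then V_k converges a.s. to a finite limit and Σ_k ζ_k < ∞ a.s. -/
/-!
Dividing by the compound factor `A k = ∏ j < k, (1 + u j)` turns the recursion into the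
supermartingale `Y k = V k / A k + ∑ j < k, (ζ j - β j) / A (j + 1)`. It is bounded below by the
predictable process `-∑ j < k, β j`, which is a.s. bounded; stopping `Y` before that bound
drops below `-a` gives supermartingales bounded below by an integrable function, hence
L¹-bounded, so `Y` converges a.s. Since `A k` increases to a finite limit when `∑ u k < ∞`,
convergence of `Y` forces `∑ ζ k / A (k + 1) < ∞`, hence `∑ ζ k < ∞`, and then convergence of `V`.
-/

open MeasureTheory Filter Finset Topology

namespace MeasureTheory

variable {Ω : Type*} {m0 : MeasurableSpace Ω} {μ : Measure Ω} {ℱ : Filtration ℕ m0}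

theorem Supermartingale.exists_ae_tendsto_of_le [IsFiniteMeasure μ] {f : ℕ → Ω → ℝ} {g : Ω → ℝ}
    (hf : Supermartingale f ℱ μ) (hg : Integrable g μ) (hgf : ∀ n ω, g ω ≤ f n ω) :
    ∀ᵐ ω ∂μ, ∃ c, Tendsto (fun n => f n ω) atTop (𝓝 c) := by
  have hbdd : ∀ n, eLpNorm ((-f) n) 1 μ
      ≤ ENNReal.ofReal (∫ ω, f 0 ω ∂μ + 2 * ∫ ω, |g ω| ∂μ) := by
    intro n
    rw [Pi.neg_apply, eLpNorm_neg, eLpNorm_one_eq_lintegral_enorm,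
      ← ofReal_integral_norm_eq_lintegral_enorm (hf.integrable n)]
    refine ENNReal.ofReal_le_ofReal ?_
    have hnorm : ∀ ω, ‖f n ω‖ ≤ f n ω + 2 * |g ω| := fun ω => by
      rw [Real.norm_eq_abs]
      cases abs_cases (f n ω) <;> cases abs_cases (g ω) <;> linarith [hgf n ω]
    calc ∫ ω, ‖f n ω‖ ∂μ ≤ ∫ ω, (f n ω + 2 * |g ω|) ∂μ :=
          integral_mono (hf.integrable n).norm ((hf.integrable n).add (hg.abs.const_mul 2)) hnorm
      _ = ∫ ω, f n ω ∂μ + 2 * ∫ ω, |g ω| ∂μ := by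
          rw [integral_add (hf.integrable n) (hg.abs.const_mul 2), integral_const_mul]
      _ ≤ ∫ ω, f 0 ω ∂μ + 2 * ∫ ω, |g ω| ∂μ := by
          have := hf.setIntegral_le (Nat.zero_le n) MeasurableSet.univ
          simp only [Measure.restrict_univ] at this
          linarith
  filter_upwards [hf.neg.exists_ae_tendsto_of_bdd hbdd] with ω ⟨c, hc⟩
  exact ⟨-c, by simpa using hc.neg⟩

/-- For monotone `L` this is `f` stopped at the first `k` with `a < L (k + 1)`, written as a
martingale transform by the predictable indicator of `L (k + 1) ≤ a`. -/
noncomputable def stoppedBeforeLevel (f L : ℕ → Ω → ℝ) (a : ℝ) (n : ℕ) (ω : Ω) : ℝ :=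
  f 0 ω + ∑ k ∈ range n, (if L (k + 1) ω ≤ a then 1 else 0) * (f (k + 1) ω - f k ω)

variable {f L : ℕ → Ω → ℝ} {a : ℝ}

lemma stoppedBeforeLevel_succ (n : ℕ) (ω : Ω) :
    stoppedBeforeLevel f L a (n + 1) ω = stoppedBeforeLevel f L a n ω
      + (if L (n + 1) ω ≤ a then 1 else 0) * (f (n + 1) ω - f n ω) := by
  simp only [stoppedBeforeLevel, sum_range_succ, add_assoc]

lemma stoppedBeforeLevel_eq_of_forall_le {n : ℕ} {ω : Ω} (h : ∀ k < n, L (k + 1) ω ≤ a) :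
    stoppedBeforeLevel f L a n ω = f n ω := by
  induction n with
  | zero => simp [stoppedBeforeLevel]
  | succ n ih =>
    rw [stoppedBeforeLevel_succ, ih fun k hk => h k (hk.trans n.lt_succ_self),
      if_pos (h n n.lt_succ_self)]
    ring

lemma exists_stoppedBeforeLevel_eq {ω : Ω} (hL : Monotone fun n => L n ω) (n : ℕ) :
    ∃ m, stoppedBeforeLevel f L a n ω = f m ω ∧ (m = 0 ∨ L m ω ≤ a) := by
  induction n with
  | zero => exact ⟨0, by simp [stoppedBeforeLevel], Or.inl rfl⟩
  | succ n ih =>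
    by_cases h : L (n + 1) ω ≤ a
    · exact ⟨n + 1, stoppedBeforeLevel_eq_of_forall_le fun k hk => (hL (by omega)).trans h,
        Or.inr h⟩
    · obtain ⟨m, hm, hLm⟩ := ih
      exact ⟨m, by rw [stoppedBeforeLevel_succ, hm, if_neg h, zero_mul, add_zero], hLm⟩

theorem Supermartingale.stoppedBeforeLevel [IsFiniteMeasure μ] (hf : Supermartingale f ℱ μ)
    (hL : Adapted ℱ fun n => L (n + 1)) (a : ℝ) :
    Supermartingale (stoppedBeforeLevel f L a) ℱ μ := by
  have hξ : StronglyAdapted ℱ fun k ω => if L (k + 1) ω ≤ a then (1 : ℝ) else 0 := fun k =>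
    (Measurable.ite (measurableSet_le (hL k) measurable_const) measurable_const
      measurable_const).stronglyMeasurable
  have hsum := hf.neg.sum_mul_sub hξ (R := 1) (fun _ _ => by split_ifs <;> norm_num)
    (fun _ _ => by split_ifs <;> norm_num)
  have hconst := martingale_const_fun ℱ μ (hf.stronglyMeasurable 0) (hf.integrable 0)
  have hdecomp : MeasureTheory.stoppedBeforeLevel f L a = (fun _ => f 0) - fun n =>
      ∑ k ∈ range n,
        (fun ω => if L (k + 1) ω ≤ a then (1 : ℝ) else 0) * ((-f) (k + 1) - (-f) k) := by
    funext n ω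
    simp only [MeasureTheory.stoppedBeforeLevel, Pi.sub_apply, Finset.sum_apply, Pi.mul_apply,
      Pi.neg_apply, neg_sub_neg]
    rw [sub_eq_add_neg, ← Finset.sum_neg_distrib]
    simp only [← mul_neg, neg_sub]
  rw [hdecomp]
  exact hconst.supermartingale.sub_submartingale hsum

theorem Supermartingale.exists_ae_tendsto_of_neg_le [IsFiniteMeasure μ]
    (hf : Supermartingale f ℱ μ) (hL : Adapted ℱ fun n => L (n + 1))
    (hLmono : ∀ ω, Monotone fun n => L n ω) (hfL : ∀ n ω, -L n ω ≤ f n ω)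
    (hLbdd : ∀ᵐ ω ∂μ, BddAbove (Set.range fun n => L n ω)) :
    ∀ᵐ ω ∂μ, ∃ c, Tendsto (fun n => f n ω) atTop (𝓝 c) := by
  have hstopped (a : ℕ) :
      ∀ᵐ ω ∂μ, ∃ c,
        Tendsto (fun n => MeasureTheory.stoppedBeforeLevel f L a n ω) atTop (𝓝 c) := by
    refine (hf.stoppedBeforeLevel hL a).exists_ae_tendsto_of_le
      ((integrable_const (-(a : ℝ))).inf (hf.integrable 0)) fun n ω => ?_
    obtain ⟨m, hm, rfl | hLm⟩ := exists_stoppedBeforeLevel_eq (hLmono ω) n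
    · exact hm ▸ inf_le_right
    · exact hm ▸ inf_le_left.trans (by linarith [hfL m ω])
  filter_upwards [ae_all_iff.mpr hstopped, hLbdd] with ω hω ⟨b, hb⟩
  obtain ⟨a, ha⟩ := exists_nat_ge b
  obtain ⟨c, hc⟩ := hω a
  exact ⟨c, hc.congr fun n =>
    stoppedBeforeLevel_eq_of_forall_le fun k _ => (hb ⟨k + 1, rfl⟩).trans ha⟩

end MeasureTheory

namespace RobbinsSiegmund

section Deterministic

noncomputable def compoundFactor (u : ℕ → ℝ) (k : ℕ) : ℝ := ∏ j ∈ range k, (1 + u j)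

noncomputable def discountedDrift (u β ζ : ℕ → ℝ) (k : ℕ) : ℝ :=
  ∑ j ∈ range k, (compoundFactor u (j + 1))⁻¹ * (ζ j - β j)

noncomputable def normalized (u v β ζ : ℕ → ℝ) (k : ℕ) : ℝ :=
  (compoundFactor u k)⁻¹ * v k + discountedDrift u β ζ k

variable {u v β ζ : ℕ → ℝ}

lemma compoundFactor_succ (k : ℕ) : compoundFactor u (k + 1) = compoundFactor u k * (1 + u k) :=
  prod_range_succ _ _

lemma one_le_compoundFactor (hu : ∀ k, 0 ≤ u k) (k : ℕ) : 1 ≤ compoundFactor u k :=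
  one_le_prod fun j _ => le_add_of_nonneg_right (hu j)

lemma compoundFactor_pos (hu : ∀ k, 0 ≤ u k) (k : ℕ) : 0 < compoundFactor u k :=
  one_pos.trans_le (one_le_compoundFactor hu k)

lemma inv_compoundFactor_nonneg (hu : ∀ k, 0 ≤ u k) (k : ℕ) : 0 ≤ (compoundFactor u k)⁻¹ :=
  inv_nonneg.2 (compoundFactor_pos hu k).le

lemma inv_compoundFactor_le_one (hu : ∀ k, 0 ≤ u k) (k : ℕ) : (compoundFactor u k)⁻¹ ≤ 1 :=
  inv_le_one_of_one_le₀ (one_le_compoundFactor hu k)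

lemma monotone_compoundFactor (hu : ∀ k, 0 ≤ u k) : Monotone (compoundFactor u) :=
  monotone_nat_of_le_succ fun k => by
    rw [compoundFactor_succ]
    exact le_mul_of_one_le_right (compoundFactor_pos hu k).le (le_add_of_nonneg_right (hu k))

lemma compoundFactor_le_exp_tsum (hu : ∀ k, 0 ≤ u k) (hsum : Summable u) (k : ℕ) :
    compoundFactor u k ≤ Real.exp (∑' j, u j) :=
  (Real.prod_one_add_le_exp_sum _ hu).trans
    (Real.exp_le_exp.2 (hsum.sum_le_tsum _ fun j _ => hu j))

lemma normalized_eq_step (hu : ∀ k, 0 ≤ u k) (k : ℕ) :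
    normalized u v β ζ k = (compoundFactor u (k + 1))⁻¹ * ((1 + u k) * v k - ζ k + β k)
      + discountedDrift u β ζ (k + 1) := by
  have h1u : 1 + u k ≠ 0 := by linarith [hu k]
  have hA := (compoundFactor_pos hu k).ne'
  rw [normalized, discountedDrift, discountedDrift, sum_range_succ, compoundFactor_succ k]
  field_simp
  ring

lemma neg_sum_le_normalized (hu : ∀ k, 0 ≤ u k) (hv : ∀ k, 0 ≤ v k) (hβ : ∀ k, 0 ≤ β k)
    (hζ : ∀ k, 0 ≤ ζ k) (k : ℕ) : -∑ j ∈ range k, β j ≤ normalized u v β ζ k := by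
  have hdrift : -∑ j ∈ range k, β j ≤ discountedDrift u β ζ k := by
    rw [discountedDrift, ← sum_neg_distrib]
    refine sum_le_sum fun j _ => ?_
    have hc0 := inv_compoundFactor_nonneg hu (j + 1)
    have hc1 := inv_compoundFactor_le_one hu (j + 1)
    nlinarith [hβ j, hζ j]
  have := mul_nonneg (inv_compoundFactor_nonneg hu k) (hv k)
  rw [normalized]
  linarith

lemma summable_discounted_of_bddAbove (hu : ∀ k, 0 ≤ u k) (hv : ∀ k, 0 ≤ v k) (hβ : ∀ k, 0 ≤ β k)
    (hζ : ∀ k, 0 ≤ ζ k) (hβsum : Summable β) (hbdd : BddAbove (Set.range (normalized u v β ζ))) :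
    Summable fun j => (compoundFactor u (j + 1))⁻¹ * ζ j := by
  obtain ⟨C, hC⟩ := hbdd
  refine summable_of_sum_range_le (c := C + ∑' j, β j)
    (fun j => mul_nonneg (inv_compoundFactor_nonneg hu _) (hζ j)) fun n => ?_
  have hsplit : ∑ j ∈ range n, (compoundFactor u (j + 1))⁻¹ * ζ j
      = normalized u v β ζ n - (compoundFactor u n)⁻¹ * v n
        + ∑ j ∈ range n, (compoundFactor u (j + 1))⁻¹ * β j := by
    rw [normalized, discountedDrift, add_sub_cancel_left, ← sum_add_distrib]
    exact sum_congr rfl fun j _ => by ring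
  have hβle : ∑ j ∈ range n, (compoundFactor u (j + 1))⁻¹ * β j ≤ ∑' j, β j :=
    (sum_le_sum fun j _ => mul_le_of_le_one_left (hβ j) (inv_compoundFactor_le_one hu _)).trans
      (hβsum.sum_le_tsum _ fun j _ => hβ j)
  have := mul_nonneg (inv_compoundFactor_nonneg hu n) (hv n)
  linarith [hC (Set.mem_range_self n)]

lemma summable_of_summable_discounted (hu : ∀ k, 0 ≤ u k) (husum : Summable u)
    (hζ : ∀ k, 0 ≤ ζ k) (h : Summable fun j => (compoundFactor u (j + 1))⁻¹ * ζ j) :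
    Summable ζ := by
  refine (h.mul_left (Real.exp (∑' j, u j))).of_nonneg_of_le hζ fun j => ?_
  have hA := compoundFactor_pos hu (j + 1)
  calc ζ j = compoundFactor u (j + 1) * ((compoundFactor u (j + 1))⁻¹ * ζ j) := by
        field_simp
    _ ≤ Real.exp (∑' j, u j) * ((compoundFactor u (j + 1))⁻¹ * ζ j) :=
        mul_le_mul_of_nonneg_right (compoundFactor_le_exp_tsum hu husum _)
          (mul_nonneg (inv_nonneg.2 hA.le) (hζ j))

theorem exists_tendsto_and_summable_of_tendsto_normalized (hu : ∀ k, 0 ≤ u k)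
    (hv : ∀ k, 0 ≤ v k) (hβ : ∀ k, 0 ≤ β k) (hζ : ∀ k, 0 ≤ ζ k) (husum : Summable u)
    (hβsum : Summable β) {c : ℝ} (hc : Tendsto (normalized u v β ζ) atTop (𝓝 c)) :
    (∃ c, Tendsto v atTop (𝓝 c)) ∧ Summable ζ := by
  have hζdisc := summable_discounted_of_bddAbove hu hv hβ hζ hβsum hc.bddAbove_range
  have hβdisc : Summable fun j => (compoundFactor u (j + 1))⁻¹ * β j :=
    hβsum.of_nonneg_of_le (fun j => mul_nonneg (inv_compoundFactor_nonneg hu _) (hβ j))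
      fun j => mul_le_of_le_one_left (hβ j) (inv_compoundFactor_le_one hu _)
  refine ⟨?_, summable_of_summable_discounted hu husum hζ hζdisc⟩
  have hdrift : Tendsto (discountedDrift u β ζ) atTop
      (𝓝 ((∑' j, (compoundFactor u (j + 1))⁻¹ * ζ j)
        - ∑' j, (compoundFactor u (j + 1))⁻¹ * β j)) := by
    refine (hζdisc.hasSum.tendsto_sum_nat.sub hβdisc.hasSum.tendsto_sum_nat).congr fun n => ?_
    rw [discountedDrift, ← sum_sub_distrib]
    exact sum_congr rfl fun j _ => by ring
  have hfactor : Tendsto (compoundFactor u) atTop (𝓝 (⨆ k, compoundFactor u k)) :=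
    tendsto_atTop_ciSup (monotone_compoundFactor hu)
      ⟨_, Set.forall_mem_range.2 (compoundFactor_le_exp_tsum hu husum)⟩
  refine ⟨_, (hfactor.mul (hc.sub hdrift)).congr fun k => ?_⟩
  rw [normalized, add_sub_cancel_right, ← mul_assoc,
    mul_inv_cancel₀ (compoundFactor_pos hu k).ne', one_mul]

end Deterministic

section Stochastic

noncomputable def normalizedProcess {Ω : Type*} (u V β ζ : ℕ → Ω → ℝ) (k : ℕ) (ω : Ω) : ℝ :=
  normalized (u · ω) (V · ω) (β · ω) (ζ · ω) k

variable {Ω : Type*} {m0 : MeasurableSpace Ω} {μ : Measure Ω} {ℱ : Filtration ℕ m0}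
  {V u β ζ : ℕ → Ω → ℝ}

lemma measurable_inv_compoundFactor (hua : Adapted ℱ u) {k n : ℕ} (hk : k ≤ n + 1) :
    Measurable[ℱ n] fun ω => (compoundFactor (u · ω) k)⁻¹ :=
  (Finset.measurable_prod _ fun j hj =>
    measurable_const.add (hua.measurable_le (by rw [mem_range] at hj; omega))).inv

lemma measurable_discountedDrift (hua : Adapted ℱ u) (hβa : Adapted ℱ β) (hζa : Adapted ℱ ζ)
    {k n : ℕ} (hk : k ≤ n + 1) :
    Measurable[ℱ n] fun ω => discountedDrift (u · ω) (β · ω) (ζ · ω) k :=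
  Finset.measurable_sum _ fun j hj => by
    rw [mem_range] at hj
    exact (measurable_inv_compoundFactor hua (by omega)).mul
      ((hζa.measurable_le (by omega)).sub (hβa.measurable_le (by omega)))

lemma adapted_normalizedProcess (hVa : Adapted ℱ V) (hua : Adapted ℱ u) (hβa : Adapted ℱ β)
    (hζa : Adapted ℱ ζ) : Adapted ℱ (normalizedProcess u V β ζ) := fun k =>
  ((measurable_inv_compoundFactor hua k.le_succ).mul (hVa k)).add
    (measurable_discountedDrift hua hβa hζa k.le_succ)

lemma integrable_inv_compoundFactor_mul (hua : Adapted ℱ u) (hu : ∀ k ω, 0 ≤ u k ω) (k : ℕ)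
    {f : Ω → ℝ} (hf : Integrable f μ) :
    Integrable (fun ω => (compoundFactor (u · ω) k)⁻¹ * f ω) μ :=
  hf.bdd_mul
    ((measurable_inv_compoundFactor hua k.le_succ).mono (ℱ.le k) le_rfl).aestronglyMeasurable
    (ae_of_all _ fun ω => by
      rw [Real.norm_of_nonneg (inv_compoundFactor_nonneg (hu · ω) k)]
      exact inv_compoundFactor_le_one (hu · ω) k)

lemma integrable_normalizedProcess (hua : Adapted ℱ u) (hu : ∀ k ω, 0 ≤ u k ω)
    (hVint : ∀ k, Integrable (V k) μ) (hβint : ∀ k, Integrable (β k) μ)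
    (hζint : ∀ k, Integrable (ζ k) μ) (k : ℕ) :
    Integrable (normalizedProcess u V β ζ k) μ :=
  (integrable_inv_compoundFactor_mul hua hu k (hVint k)).add
    (integrable_finsetSum _ fun j _ =>
      integrable_inv_compoundFactor_mul hua hu (j + 1) ((hζint j).sub (hβint j)))

theorem supermartingale_normalizedProcess [IsFiniteMeasure μ] (hVa : Adapted ℱ V)
    (hua : Adapted ℱ u) (hβa : Adapted ℱ β) (hζa : Adapted ℱ ζ) (hu : ∀ k ω, 0 ≤ u k ω)
    (hVint : ∀ k, Integrable (V k) μ) (hβint : ∀ k, Integrable (β k) μ)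
    (hζint : ∀ k, Integrable (ζ k) μ)
    (hrec : ∀ k, μ[V (k + 1) | ℱ k] ≤ᵐ[μ] fun ω => (1 + u k ω) * V k ω - ζ k ω + β k ω) :
    Supermartingale (normalizedProcess u V β ζ) ℱ μ := by
  refine supermartingale_nat
    (fun k => (adapted_normalizedProcess hVa hua hβa hζa k).stronglyMeasurable)
    (integrable_normalizedProcess hua hu hVint hβint hζint) fun k => ?_
  set c : Ω → ℝ := fun ω => (compoundFactor (u · ω) (k + 1))⁻¹
  set D : Ω → ℝ := fun ω => discountedDrift (u · ω) (β · ω) (ζ · ω) (k + 1)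
  have hc : StronglyMeasurable[ℱ k] c :=
    (measurable_inv_compoundFactor hua le_rfl).stronglyMeasurable
  have hD : StronglyMeasurable[ℱ k] D :=
    (measurable_discountedDrift hua hβa hζa le_rfl).stronglyMeasurable
  have hcV : Integrable (c * V (k + 1)) μ := integrable_inv_compoundFactor_mul hua hu _ (hVint _)
  have hDint : Integrable D μ := integrable_finsetSum _ fun j _ =>
    integrable_inv_compoundFactor_mul hua hu (j + 1) ((hζint j).sub (hβint j))
  have hcond : μ[normalizedProcess u V β ζ (k + 1) | ℱ k] =ᵐ[μ] c * μ[V (k + 1) | ℱ k] + D := by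
    change μ[c * V (k + 1) + D | ℱ k] =ᵐ[μ] _
    filter_upwards [condExp_add hcV hDint (ℱ k),
      condExp_mul_of_stronglyMeasurable_left hc hcV (hVint (k + 1))] with ω h1 h2
    rw [h1, Pi.add_apply, h2, condExp_of_stronglyMeasurable (ℱ.le k) hD hDint]
    rfl
  filter_upwards [hcond, hrec k] with ω h1 h2
  rw [h1, normalizedProcess, normalized_eq_step (hu · ω) k, Pi.add_apply, Pi.mul_apply]
  gcongr
  exact inv_compoundFactor_nonneg (hu · ω) _

end Stochastic

end RobbinsSiegmund

open RobbinsSiegmund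

theorem stmt_8_general {Ω : Type*} {m0 : MeasurableSpace Ω} {μ : Measure Ω}
    [IsProbabilityMeasure μ] (ℱ : Filtration ℕ m0)
    (V u β ζ : ℕ → Ω → ℝ)
    (hVa : Adapted ℱ V) (hua : Adapted ℱ u) (hβa : Adapted ℱ β) (hζa : Adapted ℱ ζ)
    (hVpos : ∀ k ω, 0 ≤ V k ω) (hupos : ∀ k ω, 0 ≤ u k ω)
    (hβpos : ∀ k ω, 0 ≤ β k ω) (hζpos : ∀ k ω, 0 ≤ ζ k ω)
    (hVint : ∀ k, Integrable (V k) μ)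
    (hβint : ∀ k, Integrable (β k) μ) (hζint : ∀ k, Integrable (ζ k) μ)
    (husum : ∀ᵐ ω ∂μ, Summable fun k => u k ω)
    (hβsum : ∀ᵐ ω ∂μ, Summable fun k => β k ω)
    (hrec : ∀ k, μ[V (k + 1) | ℱ k]
      ≤ᵐ[μ] fun ω => (1 + u k ω) * V k ω - ζ k ω + β k ω) :
    ∀ᵐ ω ∂μ, (∃ c : ℝ, Tendsto (fun k => V k ω) atTop (nhds c)) ∧
      Summable fun k => ζ k ω := by
  have hY := supermartingale_normalizedProcess hVa hua hβa hζa hupos hVint hβint hζint hrec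
  have hYconv := hY.exists_ae_tendsto_of_neg_le (L := fun n ω => ∑ j ∈ range n, β j ω)
    (fun n => Finset.measurable_sum _ fun j hj =>
      hβa.measurable_le (by rw [mem_range] at hj; omega))
    (fun ω => monotone_nat_of_le_succ fun n => by
      rw [sum_range_succ]
      exact le_add_of_nonneg_right (hβpos n ω))
    (fun n ω => neg_sum_le_normalized (hupos · ω) (hVpos · ω) (hβpos · ω) (hζpos · ω) n)
    (by
      filter_upwards [hβsum] with ω hω
      exact ⟨_, Set.forall_mem_range.2 fun n => hω.sum_le_tsum _ fun j _ => hβpos j ω⟩)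
  filter_upwards [husum, hβsum, hYconv] with ω huω hβω ⟨c, hc⟩
  exact exists_tendsto_and_summable_of_tendsto_normalized (hupos · ω) (hVpos · ω) (hβpos · ω)
    (hζpos · ω) huω hβω hc

/-- Robbins–Siegmund lemma: if `V, u, β, ζ` are non-negative adapted processes with
`Σ u_k < ∞` a.s., `Σ β_k < ∞` a.s. and
`E[V_{k+1} | M_k] ≤ (1 + u_k) V_k − ζ_k + β_k` a.s. for all `k`,
then `V_k` converges a.s. to a finite limit and `Σ ζ_k < ∞` a.s. -/
theorem stmt_8 {Ω : Type*} {m0 : MeasurableSpace Ω} {μ : Measure Ω}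
    [IsProbabilityMeasure μ] (ℱ : Filtration ℕ m0)
    (V u β ζ : ℕ → Ω → ℝ)
    (hVa : Adapted ℱ V) (hua : Adapted ℱ u) (hβa : Adapted ℱ β) (hζa : Adapted ℱ ζ)
    (hVpos : ∀ k ω, 0 ≤ V k ω) (hupos : ∀ k ω, 0 ≤ u k ω)
    (hβpos : ∀ k ω, 0 ≤ β k ω) (hζpos : ∀ k ω, 0 ≤ ζ k ω)
    (hVint : ∀ k, Integrable (V k) μ) (huint : ∀ k, Integrable (u k) μ)
    (hβint : ∀ k, Integrable (β k) μ) (hζint : ∀ k, Integrable (ζ k) μ)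
    (husum : ∀ᵐ ω ∂μ, Summable fun k => u k ω)
    (hβsum : ∀ᵐ ω ∂μ, Summable fun k => β k ω)
    (hrec : ∀ k, μ[V (k + 1) | ℱ k]
      ≤ᵐ[μ] fun ω => (1 + u k ω) * V k ω - ζ k ω + β k ω) :
    ∀ᵐ ω ∂μ, (∃ c : ℝ, Tendsto (fun k => V k ω) atTop (nhds c)) ∧
      Summable fun k => ζ k ω :=
  stmt_8_general ℱ V u β ζ hVa hua hβa hζa hVpos hupos hβpos hζpos hVint hβint hζint husum hβsum
    hrec
end
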